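/- For every real ν with cos(νπ/2) ≠ 0 and every z > 0, s_{0,ν}(z) = (1/cos(νπ/2)) ∫₀^{π/2} sin(z cos θ) cos(νθ) dθ. -/

import Mathlib

open Real

/-- The Lommel function `s_{μ,ν}(z)`, defined for `z > 0` by its convergent series. -/
noncomputable def lommelS (μ ν z : ℝ) : ℝ :=
  ∑' k : ℕ, (-1 : ℝ) ^ k * z ^ (μ + 2 * (k : ℝ) + 1) /
    ∏ j ∈ Finset.range (k + 1), ((μ + 2 * (j : ℝ) + 1) ^ 2 - ν ^ 2)


/-!
Expand `sin (z cos θ)` in its Taylor series and integrate termwise (the series is dominated by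
`∑ |z|ⁿ / n!`): the integral becomes `∑ (-1)ᵏ z^(2k+1) / (2k+1)! · J (2k+1)` with
`J n = ∫₀^{π/2} cosⁿ θ cos (νθ) dθ`. Integrating by parts twice gives
`((n+2)² - ν²) J (n+2) = (n+2)(n+1) J n` and `(1 - ν²) J 1 = cos (νπ/2)`, hence
`J (2k+1) ∏_{j ≤ k} ((2j+1)² - ν²) = (2k+1)! cos (νπ/2)`: the factorials cancel and what is left
is `cos (νπ/2)` times the Lommel series.
-/

open intervalIntegral Nat

lemma odd_sq_sub_sq_ne_zero_of_cos_ne_zero {ν : ℝ} (hν : cos (ν * π / 2) ≠ 0) (j : ℕ) :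
    (2 * (j : ℝ) + 1) ^ 2 - ν ^ 2 ≠ 0 := by
  intro h
  have h' : (2 * (j : ℝ) + 1 - ν) * (2 * (j : ℝ) + 1 + ν) = 0 := by linear_combination h
  rcases mul_eq_zero.1 h' with h | h
  · exact hν (cos_eq_zero_iff.2 ⟨j, by push_cast; linear_combination (-(π / 2)) * h⟩)
  · exact hν (cos_eq_zero_iff.2 ⟨-(j + 1), by push_cast; linear_combination (π / 2) * h⟩)

lemma lommelS_zero (ν z : ℝ) :
    lommelS 0 ν z = ∑' k : ℕ, (-1 : ℝ) ^ k * z ^ (2 * k + 1) /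
      ∏ j ∈ Finset.range (k + 1), ((2 * (j : ℝ) + 1) ^ 2 - ν ^ 2) := by
  refine tsum_congr fun k => ?_
  rw [show (0 : ℝ) + 2 * k + 1 = ((2 * k + 1 : ℕ) : ℝ) by push_cast; ring, rpow_natCast]
  simp only [zero_add]

noncomputable def cosMoment (ν : ℝ) (n : ℕ) : ℝ :=
  ∫ θ in (0 : ℝ)..(π / 2), cos θ ^ n * cos (ν * θ)

lemma hasDerivAt_sin_mul (ν θ : ℝ) : HasDerivAt (fun x => sin (ν * x)) (cos (ν * θ) * ν) θ := by
  simpa using ((hasDerivAt_id θ).const_mul ν).sin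

lemma hasDerivAt_cos_mul (ν θ : ℝ) : HasDerivAt (fun x => cos (ν * x)) (-sin (ν * θ) * ν) θ := by
  simpa using ((hasDerivAt_id θ).const_mul ν).cos

lemma hasDerivAt_cosMoment_one_primitive (ν θ : ℝ) :
    HasDerivAt (fun x => ν * cos x * sin (ν * x) - sin x * cos (ν * x))
      ((ν ^ 2 - 1) * cos θ * cos (ν * θ)) θ := by
  refine ((((hasDerivAt_cos θ).const_mul ν).mul (hasDerivAt_sin_mul ν θ)).sub
    ((hasDerivAt_sin θ).mul (hasDerivAt_cos_mul ν θ))).congr_deriv ?_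
  ring

lemma hasDerivAt_cosMoment_add_two_primitive (ν : ℝ) (n : ℕ) (θ : ℝ) :
    HasDerivAt (fun x => ν * cos x ^ (n + 2) * sin (ν * x)
        - (n + 2) * cos x ^ (n + 1) * sin x * cos (ν * x))
      ((ν ^ 2 - (n + 2) ^ 2) * cos θ ^ (n + 2) * cos (ν * θ)
        + (n + 2) * (n + 1) * cos θ ^ n * cos (ν * θ)) θ := by
  refine (((((hasDerivAt_cos θ).pow (n + 2)).const_mul ν).mul (hasDerivAt_sin_mul ν θ)).sub
    (((((hasDerivAt_cos θ).pow (n + 1)).const_mul ((n : ℝ) + 2)).mul (hasDerivAt_sin θ)).mul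
      (hasDerivAt_cos_mul ν θ))).congr_deriv ?_
  simp only [Pi.pow_apply, Pi.mul_apply, Nat.add_sub_cancel, show n + 2 - 1 = n + 1 from rfl,
    Nat.cast_add, Nat.cast_ofNat, Nat.cast_one]
  linear_combination (((n : ℝ) + 2) * (n + 1) * cos θ ^ n * cos (ν * θ)) * sin_sq θ

lemma cosMoment_one_mul (ν : ℝ) : cosMoment ν 1 * (1 - ν ^ 2) = cos (ν * π / 2) := by
  have key := integral_eq_sub_of_hasDerivAt (a := 0) (b := π / 2)
    (fun θ _ => hasDerivAt_cosMoment_one_primitive ν θ)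
    (Continuous.intervalIntegrable (by fun_prop) _ _)
  simp only [mul_assoc, integral_const_mul, cos_pi_div_two, sin_pi_div_two, sin_zero,
    mul_zero, zero_mul, one_mul, sub_zero, zero_sub, cos_zero] at key
  simp only [cosMoment, pow_one]
  rw [show ν * π / 2 = ν * (π / 2) by ring]
  linear_combination -key

lemma cosMoment_add_two_mul (ν : ℝ) (n : ℕ) :
    cosMoment ν (n + 2) * ((n + 2) ^ 2 - ν ^ 2) = (n + 2) * (n + 1) * cosMoment ν n := by
  have key := integral_eq_sub_of_hasDerivAt (a := 0) (b := π / 2)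
    (fun θ _ => hasDerivAt_cosMoment_add_two_primitive ν n θ)
    (Continuous.intervalIntegrable (by fun_prop) _ _)
  simp only [mul_assoc] at key
  rw [integral_add (Continuous.intervalIntegrable (by fun_prop) _ _)
      (Continuous.intervalIntegrable (by fun_prop) _ _),
    integral_const_mul, integral_const_mul, integral_const_mul] at key
  simp only [cos_pi_div_two, sin_zero, mul_zero, zero_mul, zero_pow (Nat.succ_ne_zero _),
    sub_self] at key
  rw [cosMoment, cosMoment]
  linear_combination -key

lemma cosMoment_odd_mul_prod (ν : ℝ) (k : ℕ) :
    cosMoment ν (2 * k + 1) * ∏ j ∈ Finset.range (k + 1), ((2 * (j : ℝ) + 1) ^ 2 - ν ^ 2) =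
      (2 * k + 1)! * cos (ν * π / 2) := by
  induction k with
  | zero => simpa using cosMoment_one_mul ν
  | succ k ih =>
    have step := cosMoment_add_two_mul ν (2 * k + 1)
    rw [Finset.prod_range_succ, show 2 * (k + 1) + 1 = 2 * k + 1 + 2 by ring,
      Nat.factorial_succ, Nat.factorial_succ]
    push_cast at step ⊢
    linear_combination (∏ j ∈ Finset.range (k + 1), ((2 * (j : ℝ) + 1) ^ 2 - ν ^ 2)) * step
      + (2 * k + 3) * (2 * k + 2) * ih

lemma hasSum_cosMoment_odd (ν z : ℝ) :
    HasSum (fun k : ℕ => (-1 : ℝ) ^ k * z ^ (2 * k + 1) / (2 * k + 1)! * cosMoment ν (2 * k + 1))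
      (∫ θ in (0 : ℝ)..(π / 2), sin (z * cos θ) * cos (ν * θ)) := by
  have hterm (k : ℕ) :
      (-1 : ℝ) ^ k * z ^ (2 * k + 1) / (2 * k + 1)! * cosMoment ν (2 * k + 1) =
        ∫ θ in (0 : ℝ)..(π / 2), (-1 : ℝ) ^ k * (z * cos θ) ^ (2 * k + 1) / (2 * k + 1)! *
          cos (ν * θ) := by
    rw [cosMoment, ← integral_const_mul]
    congr 1 with θ
    ring
  simp only [hterm]
  refine hasSum_integral_of_dominated_convergence (fun k _ => |z| ^ (2 * k + 1) / (2 * k + 1)!)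
    (fun k => (Continuous.aestronglyMeasurable (by fun_prop))) (fun k => ?_) ?_
    intervalIntegrable_const ?_
  · refine Filter.Eventually.of_forall fun θ _ => ?_
    have hnorm : ‖(-1 : ℝ) ^ k * (z * cos θ) ^ (2 * k + 1) / (2 * k + 1)! * cos (ν * θ)‖ =
        |z| ^ (2 * k + 1) * |cos θ| ^ (2 * k + 1) / (2 * k + 1)! * |cos (ν * θ)| := by
      simp [mul_pow]
    rw [hnorm]
    calc |z| ^ (2 * k + 1) * |cos θ| ^ (2 * k + 1) / (2 * k + 1)! * |cos (ν * θ)|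
        ≤ |z| ^ (2 * k + 1) * 1 ^ (2 * k + 1) / (2 * k + 1)! * 1 := by
          gcongr <;> exact abs_cos_le_one _
      _ = |z| ^ (2 * k + 1) / (2 * k + 1)! := by simp
  · exact Filter.Eventually.of_forall fun θ _ =>
      (summable_pow_div_factorial |z|).comp_injective fun a b h => by simpa using h
  · exact Filter.Eventually.of_forall fun θ _ => (hasSum_sin (z * cos θ)).mul_right _

theorem stmt12 (ν : ℝ) (hν : Real.cos (ν * π / 2) ≠ 0) (z : ℝ) :
    lommelS 0 ν z = (1 / Real.cos (ν * π / 2)) *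
      ∫ θ in (0:ℝ)..(π / 2), Real.sin (z * Real.cos θ) * Real.cos (ν * θ) := by
  have hprod (k : ℕ) : ∏ j ∈ Finset.range (k + 1), ((2 * (j : ℝ) + 1) ^ 2 - ν ^ 2) ≠ 0 :=
    Finset.prod_ne_zero_iff.2 fun j _ => odd_sq_sub_sq_ne_zero_of_cos_ne_zero hν j
  have hterm (k : ℕ) : (-1 : ℝ) ^ k * z ^ (2 * k + 1) / (2 * k + 1)! * cosMoment ν (2 * k + 1) =
      cos (ν * π / 2) * ((-1 : ℝ) ^ k * z ^ (2 * k + 1) /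
        ∏ j ∈ Finset.range (k + 1), ((2 * (j : ℝ) + 1) ^ 2 - ν ^ 2)) := by
    rw [eq_div_of_mul_eq (hprod k) (cosMoment_odd_mul_prod ν k)]
    field_simp
  rw [lommelS_zero, ← (hasSum_cosMoment_odd ν z).tsum_eq, tsum_congr hterm, tsum_mul_left,
    one_div, inv_mul_cancel_left₀ hν]
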